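/- Let k ∈ ℕ with k ≥ 1, let z = (z₁,…,z_k) ∈ ℝ^k with z₁ < … < z_k, let α = (α₁,…,α_k) ∈ ℝ^k and let ν ∈ (0, ρ_{z,α}). Then the derivative G_{z,α,ν}' : ℝ → ℝ is Lipschitz continuous on ℝ, and G_{z,α,ν}'(z_i) = 1 for all i ∈ {1,…,k}. -/

import Mathlib

/-- The bump function `φ(x) = (1 - x²)⁴ · 1_{[-1,1]}(x)`. -/
noncomputable def phi (x : ℝ) : ℝ := if x ∈ Set.Icc (-1 : ℝ) 1 then (1 - x ^ 2) ^ 4 else 0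

/-- The transformation `G_{z,α,ν}(x) = x + Σ_{i=1}^k α_i (x - z_i)|x - z_i| φ((x - z_i)/ν)`. -/
noncomputable def Gfun (k : ℕ) (z α : Fin k → ℝ) (ν : ℝ) (x : ℝ) : ℝ :=
  x + ∑ i : Fin k, α i * (x - z i) * |x - z i| * phi ((x - z i) / ν)

/-!
Write `q y = y² φ (y / ν)`. Since `φ = (max (1 - x²) 0)⁴`, `q` is `C³`; it is even and
supported in `[-ν, ν]`. The summand `y |y| φ (y / ν)` is `± q y` on either side of `0`, so its
derivative is `q' |y|` (`q'` is odd). This is Lipschitz because `q'` is `C¹` with compact support;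
it vanishes at `y = 0` by oddness and for `|y| > ν`, and distinct points `z i`, `z j` are more than
`2ν` apart.
-/

open Set Filter Topology

theorem LipschitzWith.finset_sum {ι α E : Type*} [PseudoEMetricSpace α]
    [SeminormedAddCommGroup E] (s : Finset ι) {f : ι → α → E} {K : ι → NNReal}
    (hf : ∀ i ∈ s, LipschitzWith (K i) (f i)) :
    LipschitzWith (∑ i ∈ s, K i) fun x ↦ ∑ i ∈ s, f i x := by
  classical
  induction s using Finset.induction_on with
  | empty => simpa using LipschitzWith.const (0 : E)
  | insert a s ha ih =>
    simp only [Finset.sum_insert ha]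
    exact (hf a (s.mem_insert_self a)).add (ih fun i hi ↦ hf i (Finset.mem_insert_of_mem hi))

theorem lt_abs_sub_of_ne {k : ℕ} {z : Fin k → ℝ} (hz : Monotone z) {ν : ℝ} (hν : 0 < ν)
    (hgap : ∀ i j : Fin k, (i : ℕ) + 1 = (j : ℕ) → ν < (z j - z i) / 2) {i j : Fin k}
    (hij : i ≠ j) : ν < |z i - z j| := by
  have hlt {a b : Fin k} (hab : a < b) : ν < z b - z a := by
    let a' : Fin k := ⟨a + 1, lt_of_le_of_lt hab b.isLt⟩
    have : z a' ≤ z b := hz (Fin.le_def.2 hab)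
    linarith [hgap a a' rfl]
  rcases Fin.lt_or_lt_of_ne hij with h | h
  · rw [abs_sub_comm]
    exact (hlt h).trans_le (le_abs_self _)
  · exact (hlt h).trans_le (le_abs_self _)

noncomputable def posPow (n : ℕ) (t : ℝ) : ℝ := max t 0 ^ n

theorem continuous_posPow (n : ℕ) : Continuous (posPow n) :=
  (continuous_id.max continuous_const).pow n

theorem hasDerivAt_posPow_succ {n : ℕ} (hn : n ≠ 0) (t : ℝ) :
    HasDerivAt (posPow (n + 1)) ((n + 1) * posPow n t) t := by
  refine hasDerivAt_of_hasDerivAt_of_ne' (x := 0) (fun y hy ↦ ?_)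
    (continuous_posPow _).continuousAt ((continuous_posPow n).const_mul _).continuousAt t
  rcases hy.lt_or_gt with hy | hy
  · have hzero : posPow (n + 1) =ᶠ[𝓝 y] fun _ ↦ 0 := by
      filter_upwards [Iio_mem_nhds hy] with s hs
      simp [posPow, max_eq_right (show s < 0 from hs).le]
    simpa [posPow, max_eq_right hy.le, hn] using
      (hasDerivAt_const y (0 : ℝ)).congr_of_eventuallyEq hzero
  · have hpow : posPow (n + 1) =ᶠ[𝓝 y] fun s ↦ s ^ (n + 1) := by
      filter_upwards [Ioi_mem_nhds hy] with s hs
      simp [posPow, max_eq_left (show 0 < s from hs).le]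
    simpa [posPow, max_eq_left hy.le] using
      (hasDerivAt_pow (n + 1) y).congr_of_eventuallyEq hpow

theorem contDiff_posPow (n : ℕ) : ContDiff ℝ n (posPow (n + 1)) := by
  induction n with
  | zero => exact contDiff_zero.2 (continuous_posPow 1)
  | succ n ih =>
    have hderiv : deriv (posPow (n + 2)) = fun t ↦ (n + 1 + 1) * posPow (n + 1) t :=
      funext fun t ↦ by exact_mod_cast (hasDerivAt_posPow_succ n.succ_ne_zero t).deriv
    push_cast
    refine contDiff_succ_iff_deriv.2
      ⟨fun t ↦ (hasDerivAt_posPow_succ n.succ_ne_zero t).differentiableAt, by simp, ?_⟩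
    rw [hderiv]
    exact contDiff_const.mul ih

theorem phi_eq_posPow : phi = fun x ↦ posPow 4 (1 - x ^ 2) := by
  funext x
  by_cases hx : x ∈ Icc (-1 : ℝ) 1
  · have : 0 ≤ 1 - x ^ 2 := by nlinarith [hx.1, hx.2]
    simp [phi, posPow, hx, max_eq_left this]
  · have : 1 - x ^ 2 ≤ 0 := by
      simp only [mem_Icc, not_and_or, not_le] at hx
      rcases hx with hx | hx <;> nlinarith
    simp [phi, posPow, hx, max_eq_right this]

theorem contDiff_phi : ContDiff ℝ 3 phi := by
  rw [phi_eq_posPow]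
  exact (contDiff_posPow 3).comp (contDiff_const.sub (contDiff_id.pow 2))

theorem phi_neg (x : ℝ) : phi (-x) = phi x := by
  simp [phi_eq_posPow]

theorem phi_eq_zero_of_one_lt_abs {x : ℝ} (hx : 1 < |x|) : phi x = 0 := by
  have : x ∉ Icc (-1 : ℝ) 1 := fun h ↦ (abs_le.2 h).not_gt hx
  simp [phi, this]

noncomputable def quadBump (ν y : ℝ) : ℝ := y ^ 2 * phi (y / ν)

theorem contDiff_quadBump (ν : ℝ) : ContDiff ℝ 3 (quadBump ν) :=
  (contDiff_id.pow 2).mul (contDiff_phi.comp (contDiff_id.div_const ν))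

theorem quadBump_neg (ν y : ℝ) : quadBump ν (-y) = quadBump ν y := by
  simp [quadBump, neg_div, phi_neg]

theorem quadBump_eq_zero {ν y : ℝ} (hν : 0 < ν) (hy : ν < |y|) : quadBump ν y = 0 := by
  rw [quadBump, phi_eq_zero_of_one_lt_abs, mul_zero]
  rwa [abs_div, abs_of_pos hν, one_lt_div hν]

theorem deriv_quadBump_neg (ν y : ℝ) : deriv (quadBump ν) (-y) = -deriv (quadBump ν) y := by
  have := deriv_comp_neg (f := quadBump ν) (x := y)
  simp only [quadBump_neg] at this
  rw [this, neg_neg]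

theorem deriv_quadBump_zero (ν : ℝ) : deriv (quadBump ν) 0 = 0 := by
  have := deriv_quadBump_neg ν 0
  rw [neg_zero] at this
  linarith

theorem tsupport_quadBump_subset {ν : ℝ} (hν : 0 < ν) :
    tsupport (quadBump ν) ⊆ Icc (-ν) ν := by
  refine closure_minimal (fun y hy ↦ ?_) isClosed_Icc
  by_contra hy'
  exact hy (quadBump_eq_zero hν (lt_of_not_ge fun h ↦ hy' (abs_le.1 h)))

theorem deriv_quadBump_eq_zero {ν y : ℝ} (hν : 0 < ν) (hy : ν < |y|) :
    deriv (quadBump ν) y = 0 := by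
  refine Function.notMem_support.1 fun h ↦ hy.not_ge ?_
  exact abs_le.2 (tsupport_quadBump_subset hν (support_deriv_subset h))

theorem exists_lipschitzWith_deriv_quadBump {ν : ℝ} (hν : 0 < ν) :
    ∃ K, LipschitzWith K (deriv (quadBump ν)) := by
  have hsupp : HasCompactSupport (quadBump ν) :=
    HasCompactSupport.intro isCompact_Icc fun y hy ↦
      Function.notMem_support.1 fun h ↦ hy (tsupport_quadBump_subset hν (subset_tsupport _ h))
  have hderiv : ContDiff ℝ 2 (deriv (quadBump ν)) :=
    (contDiff_succ_iff_deriv.1 (contDiff_quadBump ν)).2.2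
  exact hderiv.lipschitzWith_of_hasCompactSupport hsupp.deriv (by norm_num)

theorem hasDerivAt_mul_abs_mul_phi (ν y : ℝ) :
    HasDerivAt (fun y ↦ y * |y| * phi (y / ν)) (deriv (quadBump ν) |y|) y := by
  have hdiff : Differentiable ℝ (quadBump ν) :=
    (contDiff_quadBump ν).differentiable (by norm_num)
  refine hasDerivAt_of_hasDerivAt_of_ne' (x := 0) (g := fun y ↦ deriv (quadBump ν) |y|)
    (fun y hy ↦ ?_) ?_ ?_ y
  · rcases hy.lt_or_gt with hy | hy
    · have heq : (fun y ↦ y * |y| * phi (y / ν)) =ᶠ[𝓝 y] fun y ↦ -quadBump ν y := by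
        filter_upwards [Iio_mem_nhds hy] with s hs
        rw [abs_of_neg (show s < 0 from hs), quadBump]
        ring
      rw [abs_of_neg hy, deriv_quadBump_neg]
      exact (hdiff y).hasDerivAt.neg.congr_of_eventuallyEq heq
    · have heq : (fun y ↦ y * |y| * phi (y / ν)) =ᶠ[𝓝 y] quadBump ν := by
        filter_upwards [Ioi_mem_nhds hy] with s hs
        rw [abs_of_pos (show 0 < s from hs), quadBump]
        ring
      rw [abs_of_pos hy]
      exact (hdiff y).hasDerivAt.congr_of_eventuallyEq heq
  · have := contDiff_phi.continuous
    fun_prop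
  · exact ((contDiff_quadBump ν).continuous_deriv (by norm_num)).comp continuous_abs
      |>.continuousAt

theorem hasDerivAt_Gfun (k : ℕ) (z α : Fin k → ℝ) (ν x : ℝ) :
    HasDerivAt (Gfun k z α ν) (1 + ∑ i, α i * deriv (quadBump ν) |x - z i|) x := by
  have hG : Gfun k z α ν =
      fun x ↦ x + ∑ i, α i * ((x - z i) * |x - z i| * phi ((x - z i) / ν)) := by
    funext x
    simp only [Gfun, mul_assoc]
  rw [hG]
  refine (hasDerivAt_id x).add (HasDerivAt.fun_sum fun i _ ↦ ?_)
  simpa using ((hasDerivAt_mul_abs_mul_phi ν (x - z i)).comp x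
    ((hasDerivAt_id x).sub_const (z i))).const_mul (α i)

theorem deriv_Gfun (k : ℕ) (z α : Fin k → ℝ) (ν : ℝ) :
    deriv (Gfun k z α ν) = fun x ↦ 1 + ∑ i, α i * deriv (quadBump ν) |x - z i| :=
  funext fun x ↦ (hasDerivAt_Gfun k z α ν x).deriv

theorem exists_lipschitzWith_deriv_Gfun (k : ℕ) (z α : Fin k → ℝ) {ν : ℝ} (hν : 0 < ν) :
    ∃ K, LipschitzWith K (deriv (Gfun k z α ν)) := by
  obtain ⟨K, hK⟩ := exists_lipschitzWith_deriv_quadBump hν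
  have hbump (i : Fin k) : LipschitzWith (‖α i‖₊ * (K * (1 * 1)))
      fun x ↦ α i * deriv (quadBump ν) |x - z i| :=
    (lipschitzWith_smul (α i)).comp
      (hK.comp (lipschitzWith_one_norm.comp (IsometryEquiv.subRight (z i)).isometry.lipschitz))
  rw [deriv_Gfun]
  exact ⟨_, (LipschitzWith.const 1).add (LipschitzWith.finset_sum _ fun i _ ↦ hbump i)⟩

theorem deriv_Gfun_apply_eq_one {k : ℕ} {z : Fin k → ℝ} (α : Fin k → ℝ) {ν : ℝ}
    (hν : 0 < ν) (hsep : ∀ i j, i ≠ j → ν < |z i - z j|) (i : Fin k) :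
    deriv (Gfun k z α ν) (z i) = 1 := by
  rw [deriv_Gfun, add_eq_left]
  refine Finset.sum_eq_zero fun j _ ↦ ?_
  rcases eq_or_ne i j with rfl | hij
  · simp [deriv_quadBump_zero]
  · rw [deriv_quadBump_eq_zero hν (by rw [abs_abs]; exact hsep i j hij), mul_zero]

theorem stmt_4_general (k : ℕ) (z α : Fin k → ℝ) (hz : StrictMono z)
    (ν : ℝ) (hν0 : 0 < ν)
    (hν2 : ∀ i j : Fin k, (i : ℕ) + 1 = (j : ℕ) → ν < (z j - z i) / 2) :
    (∃ K : NNReal, LipschitzWith K (deriv (Gfun k z α ν))) ∧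
    (∀ i : Fin k, deriv (Gfun k z α ν) (z i) = 1) :=
  ⟨exists_lipschitzWith_deriv_Gfun k z α hν0,
    deriv_Gfun_apply_eq_one α hν0 fun _ _ ↦ lt_abs_sub_of_ne hz.monotone hν0 hν2⟩

/-- For `k ≥ 1`, `z₁ < … < z_k`, `α ∈ ℝ^k` and `ν ∈ (0, ρ_{z,α})`,
the derivative `G_{z,α,ν}'` is Lipschitz continuous on `ℝ` and `G_{z,α,ν}'(z_i) = 1`
for all `i ∈ {1,…,k}`. -/
theorem stmt_4 (k : ℕ) (hk : 1 ≤ k) (z α : Fin k → ℝ) (hz : StrictMono z)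
    (ν : ℝ) (hν0 : 0 < ν)
    (hν1 : ∀ i : Fin k, ν * (8 * |α i|) < 1)
    (hν2 : ∀ i j : Fin k, (i : ℕ) + 1 = (j : ℕ) → ν < (z j - z i) / 2) :
    (∃ K : NNReal, LipschitzWith K (deriv (Gfun k z α ν))) ∧
    (∀ i : Fin k, deriv (Gfun k z α ν) (z i) = 1) :=
  stmt_4_general k z α hz ν hν0 hν2
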